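/- Let T be a tree-layout of a graph G of bandwidth at most k. Define H as the supergraph of G on V(G) obtained by adding, for every edge xy of G, all edges making the interval [x,y] of T (the vertex set of the T-path between x and y) a clique. Then every maximal clique of H is an interval of T, i.e. its vertices appear consecutively on a root-to-leaf path of T, and ω(H) ≤ k+1. -/

import Mathlib

open SimpleGraph

/-- `x` is a (reflexive) ancestor of `y` in the tree `T` rooted at `r`,
expressed metrically: `x` lies on the unique `r`–`y` path. -/
def AncIn {V : Type*} (T : SimpleGraph V) (r x y : V) : Prop :=
  T.dist r x + T.dist x y = T.dist r y

/-- A tree-layout of `G`: a rooted tree on the vertex set of `G` such that the endpoints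
of every edge of `G` are in ancestor-descendant relation. -/
structure TreeLayout {V : Type*} (G : SimpleGraph V) where
  tree : SimpleGraph V
  isTree : tree.IsTree
  root : V
  layout : ∀ ⦃x y : V⦄, G.Adj x y → AncIn tree root x y ∨ AncIn tree root y x

namespace TreeLayout

variable {V : Type*} {G : SimpleGraph V}

/-- `x` is an ancestor of `y` (reflexively) in the tree-layout. -/
def Anc (L : TreeLayout G) (x y : V) : Prop := AncIn L.tree L.root x y

def StrictAnc (L : TreeLayout G) (x y : V) : Prop := L.Anc x y ∧ x ≠ y

/-- The bandwidth of the tree-layout is at most `k`: neighbours in `G` are at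
tree-distance at most `k`. -/
def BandwidthLE (L : TreeLayout G) (k : ℕ) : Prop :=
  ∀ ⦃x y : V⦄, G.Adj x y → L.tree.dist x y ≤ k

/-- The interval `[a,b]` of the tree-layout: vertices on the tree path from `a` to `b`
(for `a` an ancestor of `b`). -/
def interval (L : TreeLayout G) (a b : V) : Set V := {z : V | L.Anc a z ∧ L.Anc z b}

end TreeLayout

/-- Treebandwidth: the minimum bandwidth over tree-layouts of `G`. -/
noncomputable def treebandwidth {V : Type*} (G : SimpleGraph V) : ℕ :=
  sInf {k | ∃ L : TreeLayout G, L.BandwidthLE k}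

/-- Treedepth: the minimum depth (number of vertices on a root-to-leaf path) of a
tree-layout (elimination tree) of `G`. -/
noncomputable def treedepth {V : Type*} (G : SimpleGraph V) : ℕ :=
  sInf {k | ∃ L : TreeLayout G, ∀ v : V, L.tree.dist L.root v + 1 ≤ k}

/-- A tree-partition of `G`: a partition of `V(G)` indexed by the nodes of a tree such that
every edge of `G` has both ends in one part or in parts indexed by adjacent nodes. -/
structure TreePartition {V : Type*} (G : SimpleGraph V) where
  ι : Type
  tree : SimpleGraph ι
  isTree : tree.IsTree
  part : V → ι
  adj : ∀ ⦃x y : V⦄, G.Adj x y → part x = part y ∨ tree.Adj (part x) (part y)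

/-- Tree-partition-width: minimum over tree-partitions of the maximum part size. -/
noncomputable def treePartitionWidth {V : Type*} (G : SimpleGraph V) : ℕ :=
  sInf {k | ∃ P : TreePartition G, ∀ i : P.ι, {v : V | P.part v = i}.ncard ≤ k}

/-- The connected component of `v` in the subgraph of `G` induced by `S`. -/
def connCompIn {V : Type*} (G : SimpleGraph V) (S : Set V) (v : V) : Set V :=
  {w : V | ∃ (hv : v ∈ S) (hw : w ∈ S), (G.induce S).Reachable ⟨v, hv⟩ ⟨w, hw⟩}

/-- `RootedTreedepthLE G U S n` expresses `td(G[S], U) ≤ n` for the rooted treedepth: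
it is `0` when `S` misses `U`, and otherwise one may delete one vertex from each
connected component and recurse. -/
inductive RootedTreedepthLE {V : Type*} (G : SimpleGraph V) (U : Set V) : Set V → ℕ → Prop
  | base (S : Set V) (n : ℕ) (h : S ∩ U = ∅) : RootedTreedepthLE G U S n
  | step (S : Set V) (n : ℕ) (pick : ∀ v : V, v ∈ S → V)
      (hpick : ∀ (v : V) (hv : v ∈ S), pick v hv ∈ connCompIn G S v)
      (h : ∀ (v : V) (hv : v ∈ S),
        RootedTreedepthLE G U (connCompIn G S v \ {pick v hv}) n) :
      RootedTreedepthLE G U S (n + 1)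

/-- A `U`-rooted minor model of the path on `k` vertices in `G`. -/
structure RootedPathMinor {V : Type*} (G : SimpleGraph V) (U : Set V) (k : ℕ) where
  branch : Fin k → Set V
  connected : ∀ i, (G.induce (branch i)).Connected
  disjoint : ∀ i j, i ≠ j → Disjoint (branch i) (branch j)
  rooted : ∀ i, (branch i ∩ U).Nonempty
  adj : ∀ i j : Fin k, (j : ℕ) = (i : ℕ) + 1 → ∃ a ∈ branch i, ∃ b ∈ branch j, G.Adj a b

/-- A subdivision of the `k`-fan in `G` with universal (center) vertex `v`:
branch vertices `b 0, …, b (k-1)` of the path, internally disjoint spokes from `v`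
and internally disjoint path segments between consecutive branch vertices. -/
structure FanSubdivision {V : Type*} (G : SimpleGraph V) (v : V) (k : ℕ) where
  b : Fin k → V
  binj : Function.Injective b
  bne : ∀ i, b i ≠ v
  spoke : ∀ i : Fin k, G.Walk v (b i)
  spokePath : ∀ i, (spoke i).IsPath
  seg : ∀ (i : Fin k) (h : (i : ℕ) + 1 < k), G.Walk (b i) (b ⟨(i : ℕ) + 1, h⟩)
  segPath : ∀ i h, (seg i h).IsPath
  vNotinSeg : ∀ i h, v ∉ (seg i h).support
  spokeDisj : ∀ i j, i ≠ j →
    {x | x ∈ (spoke i).support} ∩ {x | x ∈ (spoke j).support} = {v}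
  spokeSegDisj : ∀ i j h,
    {x | x ∈ (spoke i).support} ∩ {x | x ∈ (seg j h).support} ⊆
      ({b i} : Set V) ∩ {b j, b ⟨(j : ℕ) + 1, h⟩}
  segDisj : ∀ i j hi hj, i ≠ j →
    {x | x ∈ (seg i hi).support} ∩ {x | x ∈ (seg j hj).support} ⊆
      ({b i, b ⟨(i : ℕ) + 1, hi⟩} : Set V) ∩ {b j, b ⟨(j : ℕ) + 1, hj⟩}

/-- A `p`-centered colouring: every (nonempty) connected induced subgraph either receives
more than `p` colours or has a uniquely coloured vertex. -/
def IsPCenteredColoring {V : Type*} (G : SimpleGraph V) (p : ℕ) (c : V → ℕ) : Prop :=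
  ∀ S : Set V, S.Nonempty → (G.induce S).Connected →
    p < (c '' S).ncard ∨ ∃ x ∈ S, ∀ y ∈ S, c y = c x → y = x

/-- Treewidth, characterised via tree-layouts: the minimum over tree-layouts of the maximum
over nodes `u` of the number of strict ancestors of `u` that are `G`-neighbours of some
descendant of `u` (including `u`). -/
noncomputable def treewidthTL {V : Type*} (G : SimpleGraph V) : ℕ :=
  sInf {k | ∃ L : TreeLayout G, ∀ u : V,
    {a : V | L.StrictAnc a u ∧ ∃ d : V, L.Anc u d ∧ G.Adj a d}.ncard ≤ k}

/-- The pruned subtree of `x` in a tree-layout: descendants of `x` (including `x`) having a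
neighbour of `x` among their own descendants. -/
def prunedSubtree {V : Type*} {G : SimpleGraph V} (L : TreeLayout G) (x : V) : Set V :=
  {y : V | L.Anc x y ∧ ∃ d : V, L.Anc y d ∧ G.Adj x d}

/-- Treespan: the minimum over tree-layouts of (maximum size of a pruned subtree minus one). -/
noncomputable def treespan {V : Type*} (G : SimpleGraph V) : ℕ :=
  sInf {k | ∃ L : TreeLayout G, ∀ x : V, (prunedSubtree L x).ncard ≤ k + 1}

/-- A tree decomposition of `G`. -/
structure TreeDecomp {V : Type*} (G : SimpleGraph V) where
  ι : Type
  tree : SimpleGraph ι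
  isTree : tree.IsTree
  bag : ι → Set V
  coverV : ∀ v : V, ∃ t, v ∈ bag t
  coverE : ∀ ⦃x y : V⦄, G.Adj x y → ∃ t, x ∈ bag t ∧ y ∈ bag t
  subtree : ∀ v : V, (tree.induce {t : ι | v ∈ bag t}).Connected

/-- Domino treewidth: minimum width over tree decompositions in which every vertex
belongs to at most two bags. -/
noncomputable def dominoTreewidth {V : Type*} (G : SimpleGraph V) : ℕ :=
  sInf {k | ∃ D : TreeDecomp G, (∀ v : V, {t : D.ι | v ∈ D.bag t}.ncard ≤ 2) ∧
    ∀ t : D.ι, (D.bag t).ncard ≤ k + 1}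

/-- Edge-treewidth via tree-layouts: the minimum over tree-layouts of the maximum over nodes
`u` of the number of edges with one endpoint a descendant of `u` (including `u`) and the other
a strict ancestor of `u`. -/
noncomputable def edgeTreewidth {V : Type*} (G : SimpleGraph V) : ℕ :=
  sInf {k | ∃ L : TreeLayout G, ∀ u : V,
    {p : V × V | L.StrictAnc p.1 u ∧ L.Anc u p.2 ∧ G.Adj p.1 p.2}.ncard ≤ k}

/-- `S` is a block (2-connected component) of `G`: a maximal connected set of vertices whose
induced subgraph has no cutvertex. -/
def IsBlock {V : Type*} (G : SimpleGraph V) (S : Set V) : Prop :=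
  S.Nonempty ∧ (G.induce S).Connected ∧
    (∀ x ∈ S, (G.induce (S \ {x})).Preconnected) ∧
    ∀ S' : Set V, S ⊆ S' → (G.induce S').Connected →
      (∀ x ∈ S', (G.induce (S' \ {x})).Preconnected) → S' = S

/-- Biconnected maximum degree: the maximum over blocks of `G` of the maximum degree
inside the block. -/
noncomputable def biconnMaxDegree {V : Type*} (G : SimpleGraph V) : ℕ :=
  sSup {d | ∃ (S : Set V) (v : V), IsBlock G S ∧ v ∈ S ∧ d = {w ∈ S | G.Adj v w}.ncard}

/-- `G` is 3-connected: more than 3 vertices, and removing any two vertices leaves it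
connected. -/
def ThreeConnected {V : Type*} (G : SimpleGraph V) : Prop :=
  3 < Nat.card V ∧ ∀ x y : V, (G.induce {v : V | v ≠ x ∧ v ≠ y}).Connected

/-- `G` has `H` as a minor (branch-set model). -/
def HasMinor {V W : Type*} (G : SimpleGraph V) (H : SimpleGraph W) : Prop :=
  ∃ B : W → Set V, (∀ w, (G.induce (B w)).Connected) ∧
    (∀ w w', w ≠ w' → Disjoint (B w) (B w')) ∧
    ∀ ⦃w w'⦄, H.Adj w w' → ∃ a ∈ B w, ∃ b ∈ B w', G.Adj a b

/-- Planarity via Wagner's theorem: no `K₅` minor and no `K₃,₃` minor. -/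
def PlanarWagner {V : Type*} (G : SimpleGraph V) : Prop :=
  ¬ HasMinor G (completeGraph (Fin 5)) ∧
    ¬ HasMinor G (completeBipartiteGraph (Fin 3) (Fin 3))

/-- A subdivision of the `k`-wheel in `G` with hub `v`. -/
structure WheelSubdivision {V : Type*} (G : SimpleGraph V) (v : V) (k : ℕ) where
  b : Fin k → V
  binj : Function.Injective b
  bne : ∀ i, b i ≠ v
  spoke : ∀ i : Fin k, G.Walk v (b i)
  spokePath : ∀ i, (spoke i).IsPath
  seg : ∀ i : Fin k, G.Walk (b i) (b (finRotate k i))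
  segPath : ∀ i, (seg i).IsPath
  vNotinSeg : ∀ i, v ∉ (seg i).support
  spokeDisj : ∀ i j, i ≠ j →
    {x | x ∈ (spoke i).support} ∩ {x | x ∈ (spoke j).support} = {v}
  spokeSegDisj : ∀ i j,
    {x | x ∈ (spoke i).support} ∩ {x | x ∈ (seg j).support} ⊆
      ({b i} : Set V) ∩ {b j, b (finRotate k j)}
  segDisj : ∀ i j, i ≠ j →
    {x | x ∈ (seg i).support} ∩ {x | x ∈ (seg j).support} ⊆
      ({b i, b (finRotate k i)} : Set V) ∩ {b j, b (finRotate k j)}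

/-- A subdivision of the `k`-dipole with poles `u`, `v`: `k` internally vertex-disjoint
`u`–`v` paths of length at least `2`. -/
structure DipoleSubdivision {V : Type*} (G : SimpleGraph V) (u v : V) (k : ℕ) where
  path : Fin k → G.Walk u v
  isPath : ∀ i, (path i).IsPath
  len : ∀ i, 2 ≤ (path i).length
  disj : ∀ i j, i ≠ j →
    {x | x ∈ (path i).support} ∩ {x | x ∈ (path j).support} = ({u, v} : Set V)

/-- A separation of `G`. -/
def IsSeparation {V : Type*} (G : SimpleGraph V) (A B : Set V) : Prop :=
  A ∪ B = Set.univ ∧ ∀ a ∈ A \ B, ∀ b ∈ B \ A, ¬ G.Adj a b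

/-- `μ(X,Y)`: the minimum order of a separation `(A,B)` with `X ⊆ A` and `Y ⊆ B`. -/
noncomputable def muSep {V : Type*} (G : SimpleGraph V) (X Y : Set V) : ℕ :=
  sInf {n | ∃ A B : Set V, IsSeparation G A B ∧ X ⊆ A ∧ Y ⊆ B ∧ (A ∩ B).ncard = n}

def IsMaximalClique {V : Type*} (G : SimpleGraph V) (K : Set V) : Prop :=
  G.IsClique K ∧ ∀ K' : Set V, G.IsClique K' → K ⊆ K' → K' = K

/-- `G` is proper chordal: it has a tree-layout in which every maximal clique is an
interval of a root-to-leaf path. -/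
def ProperChordal {V : Type*} (G : SimpleGraph V) : Prop :=
  ∃ L : TreeLayout G, ∀ K : Set V, IsMaximalClique G K →
    ∃ a b : V, L.Anc a b ∧ K = L.interval a b

/-- A topological-minor model (subdivision embedding) of `H` in `G`. -/
structure TopMinorEmbedding {W V : Type*} (H : SimpleGraph W) (G : SimpleGraph V) where
  φ : W → V
  inj : Function.Injective φ
  path : ∀ ⦃a b : W⦄, H.Adj a b → G.Walk (φ a) (φ b)
  isPath : ∀ ⦃a b : W⦄ (h : H.Adj a b), (path h).IsPath
  branchOnPath : ∀ ⦃a b : W⦄ (h : H.Adj a b) (w : W),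
    φ w ∈ (path h).support → w = a ∨ w = b
  disj : ∀ ⦃a b c d : W⦄ (hab : H.Adj a b) (hcd : H.Adj c d), s(a, b) ≠ s(c, d) →
    {x | x ∈ (path hab).support} ∩ {x | x ∈ (path hcd).support} ⊆
      ({φ a, φ b} : Set V) ∩ {φ c, φ d}

/-- A subdivision of the star `K_{1,s}` in `H` with all leaves in `X`. -/
structure StarSubdivision {V : Type*} (H : SimpleGraph V) (X : Set V) (s : ℕ) where
  center : V
  leaf : Fin s → V
  leafInj : Function.Injective leaf
  leafX : ∀ i, leaf i ∈ X
  leafNe : ∀ i, leaf i ≠ center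
  path : ∀ i : Fin s, H.Walk center (leaf i)
  isPath : ∀ i, (path i).IsPath
  disj : ∀ i j, i ≠ j →
    {x | x ∈ (path i).support} ∩ {x | x ∈ (path j).support} = {center}

/-- The weight `w(t,U)` of a set `U` at a node `t` of a tree decomposition is at most `a`:
`|β(t) ∩ U|` plus the number of a suitable family of adhesions incident to `t` whose union
hits all paths from `β(t)` to `U ∖ β(t)` is at most `a`. -/
def WeightLE {V : Type*} {G : SimpleGraph V} (D : TreeDecomp G) (U : Set V) (t : D.ι)
    (a : ℕ) : Prop :=
  ∃ F : Set D.ι, (∀ s ∈ F, D.tree.Adj t s) ∧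
    (D.bag t ∩ U).ncard + F.ncard ≤ a ∧
    ∀ ⦃x y : V⦄ (p : G.Walk x y), x ∈ D.bag t → y ∈ U \ D.bag t →
      ∃ z ∈ p.support, ∃ s ∈ F, z ∈ D.bag t ∩ D.bag s

/-- The graph obtained from `G` by subdividing the edge `xy` into a path with `n + 1`
new internal vertices. -/
def subdivideEdge {V : Type*} (G : SimpleGraph V) (x y : V) (n : ℕ) :
    SimpleGraph (V ⊕ Fin (n + 1)) :=
  SimpleGraph.fromRel (fun a b =>
    (∃ u w : V, a = Sum.inl u ∧ b = Sum.inl w ∧ G.Adj u w ∧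
      ¬(u = x ∧ w = y) ∧ ¬(u = y ∧ w = x)) ∨
    (a = Sum.inl x ∧ b = Sum.inr 0) ∨
    (∃ i : Fin n, a = Sum.inr i.castSucc ∧ b = Sum.inr i.succ) ∨
    (a = Sum.inr (Fin.last n) ∧ b = Sum.inl y))


/-!
Two vertices adjacent in `H` lie in an interval `[x,y]` with `xy ∈ E(G)`, so they are comparable
in `T` and at tree-distance at most `k`. Hence a clique of `H` is a chain of `T` on which the
depth is injective with values in a window of length `k`, which bounds its size by `k + 1`.
In particular a maximal clique `K` is finite, so it has a shallowest vertex `a` and a deepest `b`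
and `K ⊆ [a,b]`; as `a` and `b` lie in an interval `[x,y]` spanned by an edge of `G`,
`[a,b] ⊆ [x,y]` is a clique, and maximality gives `K = [a,b]`.
-/

namespace SimpleGraph

variable {V : Type*} {T : SimpleGraph V} {u v w : V}

lemma Walk.dist_add_dist_of_mem_support {p : T.Walk u v} (hp : p.length = T.dist u v)
    (hw : w ∈ p.support) : T.dist u w + T.dist w v = T.dist u v := by
  classical
  rw [← length_eq_dist_of_subwalk hp (p.isSubwalk_takeUntil hw),
    ← length_eq_dist_of_subwalk hp (p.isSubwalk_dropUntil hw), ← Walk.length_append,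
    Walk.take_spec, hp]

end SimpleGraph

namespace AncIn

open SimpleGraph

variable {V : Type*} {T : SimpleGraph V} {r x y z : V}

lemma refl (T : SimpleGraph V) (r x : V) : AncIn T r x x := by
  simp [AncIn]

lemma trans (hT : T.Connected) (hxy : AncIn T r x y) (hyz : AncIn T r y z) :
    AncIn T r x z := by
  unfold AncIn at *
  have := hT.dist_triangle (u := r) (v := x) (w := z)
  have := hT.dist_triangle (u := x) (v := y) (w := z)
  omega

lemma antisymm (hT : T.Connected) (hxy : AncIn T r x y) (hyx : AncIn T r y x) : x = y :=
  hT.dist_eq_zero_iff.mp (by unfold AncIn at *; omega)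

/-- The geodesics from `r` to `z` through `x` and through `y` coincide in a tree, so `x` and `y`
lie on one path from the root. -/
lemma total (hT : T.IsTree) (hx : AncIn T r x z) (hy : AncIn T r y z) :
    AncIn T r x y ∨ AncIn T r y x := by
  obtain ⟨p, -, hp⟩ := hT.connected.exists_path_of_dist r x
  obtain ⟨q, -, hq⟩ := hT.connected.exists_path_of_dist x z
  obtain ⟨p', -, hp'⟩ := hT.connected.exists_path_of_dist r y
  obtain ⟨q', -, hq'⟩ := hT.connected.exists_path_of_dist y z
  have hpq : (p.append q).length = T.dist r z := by rw [Walk.length_append, hp, hq]; exact hx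
  have hpq' : (p'.append q').length = T.dist r z := by
    rw [Walk.length_append, hp', hq']; exact hy
  have hsame : p.append q = p'.append q' := congrArg Subtype.val <|
    (hT.isAcyclic.subsingleton_path r z).elim ⟨_, Walk.isPath_of_length_eq_dist _ hpq⟩
      ⟨_, Walk.isPath_of_length_eq_dist _ hpq'⟩
  have hmem : x ∈ (p'.append q').support :=
    hsame ▸ Walk.mem_support_append_iff _ _ |>.mpr (.inl p.end_mem_support)
  rcases Walk.mem_support_append_iff _ _ |>.mp hmem with h | h
  · exact .inl (Walk.dist_add_dist_of_mem_support hp' h)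
  · have := Walk.dist_add_dist_of_mem_support hq' h
    exact .inr (by unfold AncIn at *; omega)

end AncIn

namespace TreeLayout

variable {V : Type*} {G : SimpleGraph V} (L : TreeLayout G) {k : ℕ} {a b u v x y z : V}

noncomputable def depth (v : V) : ℕ := L.tree.dist L.root v

variable {L}

lemma Anc.depth_add_dist (h : L.Anc x y) : L.depth x + L.tree.dist x y = L.depth y := h

lemma depth_le_depth_add_dist (x y : V) : L.depth y ≤ L.depth x + L.tree.dist x y :=
  L.isTree.connected.dist_triangle

lemma Anc.trans (hxy : L.Anc x y) (hyz : L.Anc y z) : L.Anc x z :=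
  AncIn.trans L.isTree.connected hxy hyz

lemma Anc.antisymm (hxy : L.Anc x y) (hyx : L.Anc y x) : x = y :=
  AncIn.antisymm L.isTree.connected hxy hyx

lemma Anc.total (hx : L.Anc x z) (hy : L.Anc y z) : L.Anc x y ∨ L.Anc y x :=
  AncIn.total L.isTree hx hy

lemma anc_of_comparable_of_depth_le (hxy : L.Anc x y ∨ L.Anc y x) (h : L.depth x ≤ L.depth y) :
    L.Anc x y := by
  refine hxy.elim id fun hyx => ?_
  have := hyx.depth_add_dist
  obtain rfl : y = x := L.isTree.connected.dist_eq_zero_iff.mp (by omega)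
  exact AncIn.refl _ _ _

lemma interval_subset_interval (hxa : L.Anc x a) (hby : L.Anc b y) :
    L.interval a b ⊆ L.interval x y :=
  fun _ hz => ⟨hxa.trans hz.1, hz.2.trans hby⟩

lemma subsingleton_interval_self (a : V) : (L.interval a a).Subsingleton :=
  fun _ hx _ hy => (hx.2.antisymm hx.1).trans (hy.2.antisymm hy.1).symm

variable (L) in
def intervalCompletion : SimpleGraph V :=
  SimpleGraph.fromRel fun a b => ∃ x y : V, G.Adj x y ∧ L.Anc x y ∧
    a ∈ L.interval x y ∧ b ∈ L.interval x y

lemma intervalCompletion_adj_iff : L.intervalCompletion.Adj u v ↔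
    u ≠ v ∧ ∃ x y : V, G.Adj x y ∧ L.Anc x y ∧ u ∈ L.interval x y ∧ v ∈ L.interval x y := by
  simp only [intervalCompletion, SimpleGraph.fromRel_adj]
  refine and_congr_right fun _ => ⟨?_, .inl⟩
  rintro (h | ⟨x, y, hxy, hanc, hv, hu⟩)
  exacts [h, ⟨x, y, hxy, hanc, hu, hv⟩]

lemma isClique_interval_of_adj (h : L.intervalCompletion.Adj a b) :
    L.intervalCompletion.IsClique (L.interval a b) := by
  obtain ⟨-, x, y, hxy, hanc, ha, hb⟩ := intervalCompletion_adj_iff.mp h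
  refine SimpleGraph.IsClique.subset (interval_subset_interval ha.1 hb.2) ?_
  exact fun u hu v hv huv => intervalCompletion_adj_iff.mpr ⟨huv, x, y, hxy, hanc, hu, hv⟩

lemma comparable_of_intervalCompletion_adj (h : L.intervalCompletion.Adj u v) :
    L.Anc u v ∨ L.Anc v u := by
  obtain ⟨-, x, y, -, -, hu, hv⟩ := intervalCompletion_adj_iff.mp h
  exact hu.2.total hv.2

lemma dist_le_of_intervalCompletion_adj (hL : L.BandwidthLE k)
    (h : L.intervalCompletion.Adj u v) : L.tree.dist u v ≤ k := by
  wlog huv : L.Anc u v generalizing u v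
  · rw [SimpleGraph.dist_comm]
    exact this h.symm ((comparable_of_intervalCompletion_adj h).resolve_left huv)
  obtain ⟨-, x, y, hG, hxy, hu, hv⟩ := intervalCompletion_adj_iff.mp h
  have := huv.depth_add_dist
  have := hu.1.depth_add_dist
  have := hv.2.depth_add_dist
  have := hxy.depth_add_dist
  have := hL hG
  omega

lemma comparable_of_isClique {K : Set V} (hK : L.intervalCompletion.IsClique K) (hu : u ∈ K)
    (hv : v ∈ K) : L.Anc u v ∨ L.Anc v u := by
  obtain rfl | huv := eq_or_ne u v
  · exact .inl (AncIn.refl _ _ _)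
  · exact comparable_of_intervalCompletion_adj (hK hu hv huv)

lemma anc_of_isClique_of_depth_le {K : Set V} (hK : L.intervalCompletion.IsClique K)
    (ha : a ∈ K) (hz : z ∈ K) (h : L.depth a ≤ L.depth z) : L.Anc a z :=
  anc_of_comparable_of_depth_le (comparable_of_isClique hK ha hz) h

lemma injOn_depth_of_isClique {K : Set V} (hK : L.intervalCompletion.IsClique K) :
    K.InjOn L.depth := fun _ hu _ hv huv =>
  (anc_of_isClique_of_depth_le hK hu hv huv.le).antisymm
    (anc_of_isClique_of_depth_le hK hv hu huv.ge)

lemma card_le_of_isClique (hL : L.BandwidthLE k) {s : Finset V}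
    (hs : L.intervalCompletion.IsClique (s : Set V)) : s.card ≤ k + 1 := by
  rcases s.eq_empty_or_nonempty with rfl | hne
  · simp
  obtain ⟨a, ha, hmin⟩ := s.exists_min_image L.depth hne
  have hdepth : s.image L.depth ⊆ Finset.Icc (L.depth a) (L.depth a + k) := by
    simp only [Finset.image_subset_iff, Finset.mem_Icc]
    intro z hz
    refine ⟨hmin z hz, ?_⟩
    obtain rfl | hne := eq_or_ne a z
    · omega
    · have := dist_le_of_intervalCompletion_adj hL (hs ha hz hne)
      have := depth_le_depth_add_dist (L := L) a z
      omega
  calc s.card = (s.image L.depth).card :=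
        (Finset.card_image_of_injOn (injOn_depth_of_isClique hs)).symm
    _ ≤ (Finset.Icc (L.depth a) (L.depth a + k)).card := Finset.card_le_card hdepth
    _ = k + 1 := by simp only [Nat.card_Icc]; omega

lemma finite_of_isClique (hL : L.BandwidthLE k) {K : Set V}
    (hK : L.intervalCompletion.IsClique K) : K.Finite := by
  by_contra hinf
  obtain ⟨s, hsK, hcard⟩ := Set.Infinite.exists_subset_card_eq hinf (k + 2)
  have := card_le_of_isClique hL (hK.subset hsK)
  omega

lemma nonempty_of_isMaximalClique {K : Set V} (hK : IsMaximalClique L.intervalCompletion K) :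
    K.Nonempty := by
  obtain ⟨v⟩ := L.isTree.connected.nonempty
  refine Set.nonempty_iff_ne_empty.mpr fun hempty => ?_
  have := hK.2 {v} (Set.pairwise_singleton _ _) (hempty ▸ Set.empty_subset _)
  exact Set.singleton_ne_empty v (this.trans hempty)

lemma exists_eq_interval_of_isMaximalClique (hL : L.BandwidthLE k) {K : Set V}
    (hK : IsMaximalClique L.intervalCompletion K) :
    ∃ a b : V, L.Anc a b ∧ K = L.interval a b := by
  have hfin := finite_of_isClique hL hK.1
  obtain ⟨a, ha, hmin⟩ := Set.exists_min_image K L.depth hfin (nonempty_of_isMaximalClique hK)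
  obtain ⟨b, hb, hmax⟩ := Set.exists_max_image K L.depth hfin (nonempty_of_isMaximalClique hK)
  have hsub : K ⊆ L.interval a b := fun z hz =>
    ⟨anc_of_isClique_of_depth_le hK.1 ha hz (hmin z hz),
      anc_of_isClique_of_depth_le hK.1 hz hb (hmax z hz)⟩
  have hclique : L.intervalCompletion.IsClique (L.interval a b) := by
    obtain rfl | hab := eq_or_ne a b
    · exact (subsingleton_interval_self a).pairwise _
    · exact isClique_interval_of_adj (hK.1 ha hb hab)
  exact ⟨a, b, (hsub ha).2, (hK.2 _ hclique hsub).symm⟩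

end TreeLayout

/-- the interval completion along a tree-layout of bandwidth at most `k`
has all maximal cliques equal to intervals and clique number at most `k + 1`. -/
theorem interval_completion_cliques {V : Type*} (G : SimpleGraph V) (k : ℕ)
    (L : TreeLayout G) (hL : L.BandwidthLE k) (H : SimpleGraph V)
    (hH : H = SimpleGraph.fromRel (fun a b => ∃ x y : V, G.Adj x y ∧ L.Anc x y ∧
      a ∈ L.interval x y ∧ b ∈ L.interval x y)) :
    (∀ K : Set V, IsMaximalClique H K → ∃ a b : V, L.Anc a b ∧ K = L.interval a b) ∧
      ∀ s : Finset V, H.IsClique (s : Set V) → s.card ≤ k + 1 := by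
  obtain rfl : H = L.intervalCompletion := hH
  exact ⟨fun _ hK => TreeLayout.exists_eq_interval_of_isMaximalClique hL hK,
    fun _ hs => TreeLayout.card_le_of_isClique hL hs⟩
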